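/- The sequence n² · (1 − P̄(n)) converges to 1350 as n → ∞, where P̄(n) = ((n+45)(n−10)(n−11)(n−12)(n−13)(n−14)) / (n(n−1)(n−2)(n−3)(n−4)(n−5)); in particular the mid-near false-negative probability 1 − P̄(n) is asymptotically 1350/n². -/
import Mathlib


/-- The probability that a mid-near sample is not a false negative. -/
noncomputable def Pbar (n : ℕ) : ℝ :=
  (((n : ℝ) + 45) * ((n : ℝ) - 10) * ((n : ℝ) - 11) * ((n : ℝ) - 12) *
      ((n : ℝ) - 13) * ((n : ℝ) - 14)) /
    ((n : ℝ) * ((n : ℝ) - 1) * ((n : ℝ) - 2) * ((n : ℝ) - 3) *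
      ((n : ℝ) - 4) * ((n : ℝ) - 5))

noncomputable def midnearAux (t : ℝ) : ℝ :=
  (1350 - 47700 * t + 668250 * t ^ 2 - 4328460 * t ^ 3 + 10810800 * t ^ 4) /
    (1 - 15 * t + 85 * t ^ 2 - 225 * t ^ 3 + 274 * t ^ 4 - 120 * t ^ 5)

/-- `n² · (1 − P̄(n)) → 1350`: the mid-near false-negative probability is
asymptotically `1350 / n²`. -/
theorem midnear_false_negative_asymptotics :
    Filter.Tendsto (fun n : ℕ => (n : ℝ) ^ 2 * (1 - Pbar n))
      Filter.atTop (nhds 1350) := by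
  have hinv : Filter.Tendsto (fun n : ℕ => ((n : ℝ))⁻¹) Filter.atTop (nhds 0) :=
    tendsto_inv_atTop_nhds_zero_nat
  have hcont : ContinuousAt midnearAux 0 := by
    apply ContinuousAt.div
    · fun_prop
    · fun_prop
    · norm_num
  have hval : midnearAux 0 = 1350 := by norm_num [midnearAux]
  have hmain : Filter.Tendsto (fun n : ℕ => midnearAux ((n : ℝ))⁻¹)
      Filter.atTop (nhds 1350) := by
    have := hcont.tendsto.comp hinv
    rw [hval] at this
    exact this
  refine hmain.congr' ?_
  filter_upwards [Filter.eventually_ge_atTop 6] with n hn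
  have hx : (6 : ℝ) ≤ (n : ℝ) := by exact_mod_cast hn
  set x := (n : ℝ) with hxdef
  have h0 : x ≠ 0 := by nlinarith
  have h1 : x - 1 ≠ 0 := by nlinarith
  have h2 : x - 2 ≠ 0 := by nlinarith
  have h3 : x - 3 ≠ 0 := by nlinarith
  have h4 : x - 4 ≠ 0 := by nlinarith
  have h5 : x - 5 ≠ 0 := by nlinarith
  have hD : x * (x - 1) * (x - 2) * (x - 3) * (x - 4) * (x - 5) ≠ 0 := by
    positivity
  have hden : 1 - 15 * x⁻¹ + 85 * x⁻¹ ^ 2 - 225 * x⁻¹ ^ 3 + 274 * x⁻¹ ^ 4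
      - 120 * x⁻¹ ^ 5 = (x * (x - 1) * (x - 2) * (x - 3) * (x - 4) * (x - 5)) / x ^ 6 := by
    field_simp
    ring
  have hx6 : x ^ 6 ≠ 0 := pow_ne_zero _ h0
  rw [midnearAux, hden, Pbar, ← hxdef]
  field_simp
  ring
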